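/- arXiv:0912.4678 — 2 statements merged into one kernel-verified Lean document; each statement's English description precedes it below -/
import Mathlib

section
/- For every integer n ≥ 1, the alternating sum ∑_{γ=1}^{n} ((-1)^{γ-1}/γ) * C(n-1, γ-1)^2 equals (2^{n-1}/n) * P^{(1,0)}_{n-1}(0), where P^{(1,0)}_{n-1} is the Jacobi polynomial with parameters (1,0). -/
open Finset

/-- Jacobi polynomial `P^{(α,β)}_n(x)` defined via the terminating
hypergeometric representation
`P^{(α,β)}_n(x) = (Γ(n+α+1)/(Γ(n+1)Γ(α+1))) ₂F₁(-n, n+α+β+1; α+1; (1-x)/2)`. -/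
noncomputable def jacobiP (α β : ℝ) (n : ℕ) (x : ℝ) : ℝ :=
  (Real.Gamma (n + α + 1) / (Real.Gamma (n + 1) * Real.Gamma (α + 1))) *
    ∑ k ∈ Finset.range (n + 1),
      (-1 : ℝ) ^ k * (n.choose k) *
        ((ascPochhammer ℝ k).eval (n + α + β + 1) / (ascPochhammer ℝ k).eval (α + 1)) *
        ((1 - x) / 2) ^ k

/-- Legendre polynomial, normalized so that `P_n(1) = 1`. -/
noncomputable def legendreP (n : ℕ) (x : ℝ) : ℝ := jacobiP 0 0 n x

/-! Write `n = m + 1`. Since `(m + 1) * C(m, k) = (k + 1) * C(m + 1, k + 1)`, the left side is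
`(m + 1)⁻¹ * ∑ (-1)^k C(m, k) C(m + 1, k + 1)`, and that sum is the coefficient of `X ^ m` in
`(1 - X) ^ m * (1 + X) ^ (m + 1)`. Expanding `1 - X = 2 - (1 + X)` binomially computes the same
coefficient as `∑ (-1)^k C(m, k) C(m + k + 1, k + 1) 2^(m - k)`, which is
`2 ^ m * P^{(1,0)}_m(0)`: the `k`-th hypergeometric term of `P^{(1,0)}_m(x)` is
`(-1)^k C(m, k) C(m + k + 1, k + 1) ((1 - x) / 2)^k`. -/

open Polynomial
open scoped Nat

theorem Finset.sum_Icc_one_eq_sum_range {M : Type*} [AddCommMonoid M] (f : ℕ → M) (n : ℕ) :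
    ∑ i ∈ Icc 1 n, f i = ∑ k ∈ range n, f (k + 1) := by
  rw [range_eq_Ico, sum_Ico_add' f 0 n 1, zero_add, Ico_add_one_right_eq_Icc]

theorem Polynomial.coeff_one_sub_X_pow (R : Type*) [CommRing R] {m k : ℕ} (hk : k ≤ m) :
    ((1 - X : R[X]) ^ m).coeff k = (-1) ^ k * m.choose k := by
  have h : (1 - X : R[X]) ^ m = C ((-1) ^ m) * (X + C (-1)) ^ m := by
    rw [map_pow, map_neg, map_one, ← mul_pow]
    congr 1; ring
  rw [h, coeff_C_mul, coeff_X_add_C_pow, ← mul_assoc, ← pow_add,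
    show m + (m - k) = k + 2 * (m - k) by omega, pow_add, pow_mul, neg_one_sq, one_pow, mul_one]

theorem sum_neg_one_pow_mul_choose_mul_choose_succ (R : Type*) [CommRing R] (m : ℕ) :
    ∑ k ∈ range (m + 1), (-1 : R) ^ k * m.choose k * (m + 1).choose (k + 1) =
      ∑ k ∈ range (m + 1),
        (-1 : R) ^ k * m.choose k * (m + k + 1).choose (k + 1) * 2 ^ (m - k) := by
  have cauchy : ((1 - X : R[X]) ^ m * (1 + X) ^ (m + 1)).coeff m =
      ∑ k ∈ range (m + 1), (-1 : R) ^ k * m.choose k * (m + 1).choose (k + 1) := by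
    rw [coeff_mul, Nat.sum_antidiagonal_eq_sum_range_succ_mk]
    refine sum_congr rfl fun k hk => ?_
    have hk : k ≤ m := Nat.lt_succ_iff.mp (mem_range.mp hk)
    rw [coeff_one_sub_X_pow R hk, coeff_one_add_X_pow,
      show m - k = m + 1 - (k + 1) by omega, Nat.choose_symm (by omega)]
  have binomial : ((1 - X : R[X]) ^ m * (1 + X) ^ (m + 1)).coeff m =
      ∑ k ∈ range (m + 1),
        (-1 : R) ^ k * m.choose k * (m + k + 1).choose (k + 1) * 2 ^ (m - k) := by
    rw [show (1 - X : R[X]) = -(1 + X) + C 2 by rw [map_ofNat]; ring, add_pow, sum_mul,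
      finsetSum_coeff]
    refine sum_congr rfl fun k _ => ?_
    rw [show (-(1 + X)) ^ k * C 2 ^ (m - k) * (m.choose k : R[X]) * (1 + X) ^ (m + 1) =
        C ((-1 : R) ^ k * m.choose k * 2 ^ (m - k)) * (1 + X) ^ (m + k + 1) by
      rw [neg_pow, map_mul, map_mul, map_pow, map_pow, map_neg, map_one, map_natCast]; ring,
      coeff_C_mul, coeff_one_add_X_pow,
      Nat.choose_symm_of_eq_add (show m + k + 1 = m + (k + 1) by omega)]
    ring
  rw [← cauchy, binomial]

theorem Nat.add_one_mul_ascFactorial_eq_choose_mul_factorial (m k : ℕ) :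
    (m + 1) * (m + 2).ascFactorial k = (m + k + 1).choose (k + 1) * (k + 1)! := by
  refine Nat.eq_of_mul_eq_mul_left m.factorial_pos ?_
  have h := Nat.choose_mul_factorial_mul_factorial (show k + 1 ≤ m + k + 1 by omega)
  rw [show m + k + 1 - (k + 1) = m by omega] at h
  rw [← mul_assoc, mul_comm m ! (m + 1), ← Nat.factorial_succ, Nat.factorial_mul_ascFactorial,
    add_right_comm, ← h]
  ring_nf

theorem jacobiP_one_zero (m : ℕ) (x : ℝ) :
    jacobiP 1 0 m x =
      ∑ k ∈ range (m + 1),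
        (-1) ^ k * m.choose k * (m + k + 1).choose (k + 1) * ((1 - x) / 2) ^ k := by
  have prefactor :
      Real.Gamma (m + 1 + 1) / (Real.Gamma (m + 1) * Real.Gamma (1 + 1)) = m + 1 := by
    rw [one_add_one_eq_two, Real.Gamma_two, mul_one, Real.Gamma_add_one (by positivity),
      mul_div_cancel_right₀ _ (Real.Gamma_pos_of_pos (by positivity)).ne']
  rw [jacobiP, prefactor, mul_sum]
  refine sum_congr rfl fun k _ => ?_
  have numerator :=
    congrArg (Nat.cast : ℕ → ℝ) (Nat.add_one_mul_ascFactorial_eq_choose_mul_factorial m k)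
  have denominator : ((2 : ℕ).ascFactorial k : ℝ) = (k + 1)! := by
    rw [add_comm k 1, ← Nat.factorial_mul_ascFactorial 1 k, Nat.factorial_one, one_mul]
  push_cast [Nat.cast_ascFactorial] at numerator denominator
  rw [show (m : ℝ) + 1 + 0 + 1 = m + 2 by ring, one_add_one_eq_two, denominator]
  field_simp
  linear_combination m.choose k * ((1 - x) / 2) ^ k * numerator

theorem sum_neg_one_pow_div_succ_mul_choose_sq (K : Type*) [Field K] [CharZero K] (m : ℕ) :
    ∑ k ∈ range (m + 1), (-1 : K) ^ k / (k + 1) * m.choose k ^ 2 =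
      (m + 1 : K)⁻¹ *
        ∑ k ∈ range (m + 1), (-1 : K) ^ k * m.choose k * (m + 1).choose (k + 1) := by
  rw [mul_sum]
  refine sum_congr rfl fun k _ => ?_
  have h := congrArg (Nat.cast : ℕ → K) (Nat.add_one_mul_choose_eq m k)
  push_cast at h
  field_simp
  linear_combination m.choose k * h

theorem alt_sum_eq_jacobi (n : ℕ) (hn : 1 ≤ n) :
    ∑ γ ∈ Finset.Icc 1 n, ((-1 : ℝ) ^ (γ - 1) / (γ : ℝ)) * ((n - 1).choose (γ - 1) : ℝ) ^ 2 =
      (2 ^ (n - 1) / (n : ℝ)) * jacobiP 1 0 (n - 1) 0 := by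
  obtain ⟨m, rfl⟩ := Nat.exists_eq_add_of_le' hn
  simp only [sum_Icc_one_eq_sum_range, Nat.add_sub_cancel, Nat.cast_add, Nat.cast_one]
  rw [sum_neg_one_pow_div_succ_mul_choose_sq, sum_neg_one_pow_mul_choose_mul_choose_succ,
    jacobiP_one_zero, mul_sum, mul_sum]
  refine sum_congr rfl fun k hk => ?_
  rw [pow_sub₀ (2 : ℝ) two_ne_zero (Nat.lt_succ_iff.mp (mem_range.mp hk)), sub_zero, div_pow,
    one_pow]
  ring
end

section
/- Define p(0) = 1 and p(n) = (1/2)[P_{n-1}(0)^2 + P_n(0)^2] for n ≥ 1, where P_m is the m-th Legendre polynomial. Then for every integer m ≥ 1, p(2m) = p(2m+1) = (1/2^{4m+1}) * C(2m, m)^2. -/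
open Finset

/-- Return probability `p_{2n}(0)` of the symmetric 1D Hadamard walk. -/
noncomputable def hadamardReturnProb (n : ℕ) : ℝ :=
  if n = 0 then 1
  else (1 / 2) * (legendreP (n - 1) 0 ^ 2 + legendreP n 0 ^ 2)

/-! Since `legendreP n x` is the shifted Legendre polynomial `P̃ₙ` evaluated at `(1 - x) / 2`,
`Pₙ(0) = P̃ₙ(1/2)`. By Rodrigues' formula `n! P̃ₙ = Dⁿ (x (1 - x))ⁿ`, so `P̃ₙ(1/2)` is the `n`-th
Taylor coefficient at `1/2` of `(x (1 - x))ⁿ = (1/4 - (x - 1/2)²)ⁿ`. This vanishes for odd `n` and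
equals `(-1/4)ᵐ C(2m, m)` for `n = 2m`; hence in `p(2m)` and `p(2m+1)` only the square of
`P_{2m}(0)` survives. -/

open Polynomial Nat

namespace Polynomial

theorem coeff_X_sq_sub_C_pow {R : Type*} [CommRing R] (c : R) (n k : ℕ) :
    ((X ^ 2 - C c) ^ n).coeff k = if 2 ∣ k then (-c) ^ (n - k / 2) * n.choose (k / 2) else 0 := by
  rw [show (X ^ 2 - C c) ^ n = expand R 2 ((X + C (-c)) ^ n) by simp [sub_eq_add_neg],
    coeff_expand two_pos, coeff_X_add_C_pow]

theorem aeval_half_shiftedLegendre {K : Type*} [Field K] [CharZero K] (n : ℕ) :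
    aeval (2⁻¹ : K) (shiftedLegendre n) = (-1) ^ n * ((X ^ 2 - C (4⁻¹ : K)) ^ n).coeff n := by
  set q : K[X] := (X * (1 - X)) ^ n with hq
  have rodrigues : (n ! : K[X]) * (shiftedLegendre n).map (algebraMap ℤ K) = derivative^[n] q := by
    have := congrArg (map (algebraMap ℤ K)) (factorial_mul_shiftedLegendre_eq n)
    simpa [← iterate_derivative_map, mul_pow, q] using this
  have taylor_q : taylor 2⁻¹ q = C ((-1) ^ n) * (X ^ 2 - C 4⁻¹) ^ n := by
    have centered : (X * (1 - X) : K[X]).comp (X + C 2⁻¹) = C (-1) * (X ^ 2 - C 4⁻¹) := by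
      have h4 : C (4⁻¹ : K) = C 2⁻¹ ^ 2 := by rw [← C_pow]; norm_num
      have h2 : (2 : K[X]) * C 2⁻¹ = 1 := by rw [← C_ofNat, ← C_mul]; norm_num
      simp only [mul_comp, sub_comp, X_comp, one_comp, h4, C_neg, C_1]
      linear_combination (-(X + C 2⁻¹)) * h2
    rw [taylor_apply, hq, pow_comp, centered, mul_pow, C_pow]
  have scaled : (n ! : K) * aeval 2⁻¹ (shiftedLegendre n) = n ! * (taylor 2⁻¹ q).coeff n := by
    calc (n ! : K) * aeval 2⁻¹ (shiftedLegendre n)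
        = eval 2⁻¹ ((n ! : K[X]) * (shiftedLegendre n).map (algebraMap ℤ K)) := by
          rw [eval_mul, eval_natCast, eval_map_algebraMap]
      _ = eval 2⁻¹ ((n ! • hasseDeriv n) q) := by rw [rodrigues, factorial_smul_hasseDeriv]
      _ = n ! * (taylor 2⁻¹ q).coeff n := by simp [taylor_coeff]
  rw [← coeff_C_mul, ← taylor_q]
  exact mul_left_cancel₀ (Nat.cast_ne_zero.mpr (factorial_ne_zero n)) scaled

end Polynomial

theorem ascPochhammer_eval_natCast_succ_div_eval_one {K : Type*} [Field K] [CharZero K] (n k : ℕ) :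
    (ascPochhammer K k).eval ((n : K) + 1) / (ascPochhammer K k).eval 1 = (n + k).choose n := by
  have hn := ascPochhammer_eval_cast K k (n + 1)
  have h1 := ascPochhammer_eval_cast K k 1
  rw [ascPochhammer_nat_eq_ascFactorial, Nat.ascFactorial_eq_factorial_mul_choose] at hn
  rw [ascPochhammer_nat_eq_ascFactorial, Nat.one_ascFactorial] at h1
  push_cast at hn h1
  rw [← hn, ← h1, mul_div_cancel_left₀ _ (Nat.cast_ne_zero.mpr (factorial_ne_zero k)), add_comm n k,
    Nat.choose_symm_add]

theorem legendreP_eq_aeval_shiftedLegendre (n : ℕ) (x : ℝ) :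
    legendreP n x = aeval ((1 - x) / 2) (shiftedLegendre n) := by
  have prefactor : Real.Gamma (n + 0 + 1) / (Real.Gamma (n + 1) * Real.Gamma (0 + 1)) = 1 := by
    simp [(Real.Gamma_pos_of_pos (by positivity : (0 : ℝ) < n + 1)).ne']
  rw [legendreP, jacobiP, prefactor, one_mul, shiftedLegendre, map_sum]
  refine Finset.sum_congr rfl fun k _ => ?_
  simp only [add_zero, zero_add]
  rw [ascPochhammer_eval_natCast_succ_div_eval_one]
  simp

theorem legendreP_zero (n : ℕ) : legendreP n 0 = aeval (2⁻¹ : ℝ) (shiftedLegendre n) := by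
  rw [legendreP_eq_aeval_shiftedLegendre, sub_zero, one_div]

theorem legendreP_zero_of_odd {n : ℕ} (hn : Odd n) : legendreP n 0 = 0 := by
  rw [legendreP_zero, aeval_half_shiftedLegendre, coeff_X_sq_sub_C_pow,
    if_neg hn.not_two_dvd_nat, mul_zero]

theorem legendreP_zero_two_mul (m : ℕ) :
    legendreP (2 * m) 0 = (-4⁻¹) ^ m * (2 * m).choose m := by
  rw [legendreP_zero, aeval_half_shiftedLegendre, coeff_X_sq_sub_C_pow, if_pos (dvd_mul_right 2 m),
    Nat.mul_div_cancel_left m two_pos, show 2 * m - m = m by omega, pow_mul, neg_one_sq, one_pow,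
    one_mul]

theorem return_prob_explicit (m : ℕ) (hm : 1 ≤ m) :
    hadamardReturnProb (2 * m) = (1 / 2 ^ (4 * m + 1)) * ((2 * m).choose m : ℝ) ^ 2 ∧
      hadamardReturnProb (2 * m + 1) = (1 / 2 ^ (4 * m + 1)) * ((2 * m).choose m : ℝ) ^ 2 := by
  have even_sq : legendreP (2 * m) 0 ^ 2 = (1 / 2 ^ (4 * m)) * ((2 * m).choose m : ℝ) ^ 2 := by
    rw [legendreP_zero_two_mul, mul_pow, ← pow_mul, mul_comm m 2, pow_mul, neg_sq, pow_mul]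
    norm_num [div_pow]
  have odd_before : Odd (2 * m - 1) := ⟨m - 1, by omega⟩
  refine ⟨?_, ?_⟩
  · rw [hadamardReturnProb, if_neg (by omega), legendreP_zero_of_odd odd_before, even_sq]
    ring
  · rw [hadamardReturnProb, if_neg (by omega), Nat.add_sub_cancel,
      legendreP_zero_of_odd (odd_two_mul_add_one m), even_sq]
    ring
end
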